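/- arXiv:1710.04332 — 2 statements merged into one kernel-verified Lean document; each statement's English description precedes it below -/
import Mathlib

section
/- Let p be a prime number and let H be a subgroup of the symmetric group S_p on p letters. Suppose H is transitive (for all i, j ∈ {1,...,p} there exists σ ∈ H with σ(i) = j) and H contains a transposition. Then H = S_p. -/
open Equiv MulAction

theorem MulAction.card_dvd_card_of_isPretransitive (G X : Type*) [Group G] [MulAction G X]
    [IsPretransitive G X] [Nonempty X] : Nat.card X ∣ Nat.card G := by
  obtain ⟨x⟩ := ‹Nonempty X›
  rw [← index_stabilizer_of_transitive G x]
  exact (stabilizer G x).index_dvd_card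

/-- Transitivity makes `|α|` divide `|H|`, so by Cauchy `H` contains an element of prime order
`|α|`, i.e. a `|α|`-cycle, and a full cycle of prime length together with a swap generates
`Perm α`. -/
theorem Equiv.Perm.subgroup_eq_top_of_isPretransitive_of_swap_mem {α : Type*} [Fintype α]
    [DecidableEq α] {H : Subgroup (Perm α)} [IsPretransitive H α]
    (hα : (Fintype.card α).Prime) {τ : Perm α} (hτH : τ ∈ H) (hτ : τ.IsSwap) : H = ⊤ := by
  classical
  have : Nonempty α := Fintype.card_pos_iff.mp hα.pos
  have hdvd : Fintype.card α ∣ Fintype.card H := by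
    simpa only [Nat.card_eq_fintype_card] using card_dvd_card_of_isPretransitive H α
  exact Perm.subgroup_eq_top_of_swap_mem hα hdvd hτH hτ

/-- A transitive subgroup of the symmetric group on `p` letters, `p` prime,
containing a transposition is the whole symmetric group. -/
theorem stmt_3 (p : ℕ) (hp : p.Prime) (H : Subgroup (Equiv.Perm (Fin p)))
    (htrans : ∀ i j : Fin p, ∃ σ ∈ H, σ i = j)
    (σ : Equiv.Perm (Fin p)) (hσH : σ ∈ H) (hσ : σ.IsSwap) :
    H = ⊤ := by
  have : IsPretransitive H (Fin p) := ⟨fun i j => by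
    obtain ⟨g, hgH, hgi⟩ := htrans i j
    exact ⟨⟨g, hgH⟩, hgi⟩⟩
  exact Perm.subgroup_eq_top_of_isPretransitive_of_swap_mem (by rwa [Fintype.card_fin]) hσH hσ
end

section
/- Let d ≥ 1 and set γ = t^d and c = 2t^d + t in ℚ[t]. Define the critical orbit sequence a : ℕ → ℚ[t] by a_0 = γ and a_{n+1} = (a_n − γ)² + c (so a_n = φ_{(γ,c)}^n(γ) for the quadratic polynomial φ_{(γ,c)}(x) = (x − γ)² + c). Then for every n ≥ 1, the polynomial a_n ∈ ℚ[t] is squarefree; in particular its discriminant is nonzero. -/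
/-!
Write `a n` as the image of the integer polynomial `A n = orbit d n`.

For `d ≥ 2`, reduction mod 2 kills `2 t^d`, so `A (n+1) ≡ (A n - t^d)² + t` has derivative `1`
and is squarefree over `𝔽₂`, while its leading coefficient (`2` for `n = 0`, `1` afterwards) is
not divisible by `4`. By Gauss's lemma a square factor over `ℚ` comes from a primitive `P`
with `P² ∣ A (n+1)` over `ℤ`; then `P` is a unit mod 2, so its leading coefficient is even
unless `P` is constant, and that would make `4` divide the leading coefficient of `A (n+1)`.

For `d = 1` the orbit is `a (k+1) = t · g_k(2t)` with `g_k = 2 s_k + 1`, where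
`s_k = xSqIter k` satisfies `s_0 = 1`, `s_{k+1} = t s_k² + 1`. The polynomial `g_k` has
constant term `3`, leading coefficient `2` and all other coefficients even, so its mirror is
Eisenstein at `2` and `g_k` is irreducible; and `g_k(0) = 3` keeps it coprime to `t`.
-/

open Polynomial

namespace Polynomial

section Mirror

variable {R : Type*} [CommRing R] [IsDomain R] {f : R[X]}

theorem isUnit_mirror_iff : IsUnit f.mirror ↔ IsUnit f := by
  suffices h : ∀ g : R[X], IsUnit g → IsUnit g.mirror from
    ⟨fun hf => mirror_mirror f ▸ h _ hf, h f⟩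
  intro g hg
  obtain ⟨r, -, rfl⟩ := isUnit_iff.mp hg
  rwa [mirror_C]

theorem _root_.Irreducible.mirror (hf : Irreducible f) : Irreducible f.mirror := by
  refine ⟨isUnit_mirror_iff.not.mpr hf.not_isUnit, fun a b hab => ?_⟩
  have : f = a.mirror * b.mirror := by rw [← mirror_mul_of_domain, ← hab, mirror_mirror]
  simpa only [isUnit_mirror_iff] using hf.isUnit_or_isUnit this

theorem IsPrimitive.mirror (hf : f.IsPrimitive) : f.mirror.IsPrimitive := by
  rintro r ⟨q, hq⟩
  refine hf r ⟨q.mirror, ?_⟩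
  rw [← mirror_mirror f, hq, mirror_mul_of_domain, mirror_C]

/-- Dual Eisenstein criterion: the hypotheses say that `f.mirror` is Eisenstein at `P`. -/
theorem irreducible_of_isEisensteinAt_mirror {P : Ideal R} (hP : P.IsPrime)
    (hprim : f.IsPrimitive) (hdeg : 0 < f.natDegree) (h0 : f.coeff 0 ∉ P)
    (hcoeff : ∀ n, 0 < n → f.coeff n ∈ P) (hlc : f.leadingCoeff ∉ P ^ 2) : Irreducible f := by
  have htrail : f.natTrailingDegree = 0 :=
    natTrailingDegree_eq_zero.mpr (Or.inr fun h => h0 (h ▸ P.zero_mem))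
  have hmirror : f.mirror.IsEisensteinAt P := by
    refine ⟨?_, fun {n} hn => ?_, ?_⟩
    · rwa [mirror_leadingCoeff, trailingCoeff, htrail]
    · rw [mirror_natDegree] at hn
      rw [coeff_mirror, htrail, add_zero, revAt_le hn.le]
      exact hcoeff _ (by omega)
    · rwa [coeff_mirror, htrail, add_zero, revAt_zero]
  exact mirror_mirror f ▸ (hmirror.irreducible hP hprim.mirror (by rwa [mirror_natDegree])).mirror

end Mirror

theorem _root_.Irreducible.comp_C_mul_X {K : Type*} [Field K] {f : K[X]} (hf : Irreducible f)
    {a : K} (ha : a ≠ 0) : Irreducible (f.comp (C a * X)) := by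
  let := invertibleOfNonzero ha
  simpa [comp_eq_aeval] using hf.map (algEquivCMulXAddC a 0)

theorem squarefree_X_mul {K : Type*} [Field K] {f : K[X]} (hf : Squarefree f)
    (h0 : f.coeff 0 ≠ 0) : Squarefree (X * f) :=
  squarefree_mul_iff.mpr ⟨irreducible_X.isRelPrime_iff_not_dvd.mpr (X_dvd_iff.not.mpr h0),
    irreducible_X.squarefree, hf⟩

theorem separable_sq_add_X {R : Type*} [CommRing R] [CharP R 2] (f : R[X]) :
    (f ^ 2 + X).Separable := by
  simpa [Separable, derivative_pow, CharTwo.two_eq_zero] using isCoprime_one_right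

theorem exists_isPrimitive_associated_map {R K : Type*} [CommRing R] [IsDomain R]
    [NormalizedGCDMonoid R] [Field K] [Algebra R K] [IsFractionRing R K] {x : K[X]} (hx : x ≠ 0) :
    ∃ P : R[X], P.IsPrimitive ∧ Associated (P.map (algebraMap R K)) x := by
  set z := IsLocalization.integerNormalization (nonZeroDivisors R) x
  obtain ⟨b, hb_mem, hb⟩ := IsLocalization.integerNormalization_spec (nonZeroDivisors R) x
  have hz : z ≠ 0 := (IsFractionRing.integerNormalization_eq_zero_iff).not.mpr hx
  refine ⟨z.primPart, z.isPrimitive_primPart, ?_⟩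
  have hcontent : algebraMap R K z.content ≠ 0 :=
    (IsFractionRing.to_map_ne_zero_of_mem_nonZeroDivisors (mem_nonZeroDivisors_of_ne_zero
      ((content_eq_zero_iff).not.mpr hz)))
  have hb0 : algebraMap R K b ≠ 0 := IsFractionRing.to_map_ne_zero_of_mem_nonZeroDivisors hb_mem
  have key : C (algebraMap R K z.content) * z.primPart.map (algebraMap R K)
      = C (algebraMap R K b) * x := by
    rw [← map_C, ← Polynomial.map_mul, ← z.eq_C_content_mul_primPart, hb, Algebra.smul_def,
      algebraMap_apply]
  exact (associated_unit_mul_left _ _ (isUnit_C.mpr hcontent.isUnit)).symm.trans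
    (key ▸ associated_unit_mul_left _ _ (isUnit_C.mpr hb0.isUnit))

theorem squarefree_map_of_squarefree_map_zmod {p : ℕ} [Fact p.Prime] {B : ℤ[X]}
    (hB : Squarefree (B.map (Int.castRingHom (ZMod p))))
    (hlc : ¬ (p : ℤ) ^ 2 ∣ B.leadingCoeff) : Squarefree (B.map (Int.castRingHom ℚ)) := by
  intro x hx
  have hx0 : x ≠ 0 := by
    rintro rfl
    have hB0 : B = 0 := by
      simpa [Polynomial.map_eq_zero_iff (Int.castRingHom ℚ).injective_int] using hx
    exact hlc (by simp [hB0])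
  obtain ⟨P, hP, hPx⟩ := exists_isPrimitive_associated_map (R := ℤ) hx0
  rw [algebraMap_int_eq] at hPx
  obtain ⟨Q, hQ⟩ : P * P ∣ B := by
    rw [IsPrimitive.Int.dvd_iff_map_cast_dvd_map_cast _ _ (hP.mul hP), Polynomial.map_mul]
    exact ((hPx.mul_mul hPx).dvd_iff_dvd_left).mpr hx
  have hPunit : IsUnit (P.map (Int.castRingHom (ZMod p))) :=
    hB _ ⟨Q.map _, by rw [hQ, Polynomial.map_mul, Polynomial.map_mul]⟩
  have hlcP : ¬ (p : ℤ) ∣ P.leadingCoeff := by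
    rintro ⟨e, he⟩
    exact hlc ⟨e * e * Q.leadingCoeff, by rw [hQ, leadingCoeff_mul, leadingCoeff_mul, he]; ring⟩
  have hdeg : P.natDegree = 0 := by
    rw [← natDegree_map_of_leadingCoeff_ne_zero (Int.castRingHom (ZMod p))
      (by simpa [ZMod.intCast_zmod_eq_zero_iff_dvd] using hlcP)]
    exact natDegree_eq_zero_of_isUnit hPunit
  have hP0 := hP.ne_zero
  rw [eq_C_of_natDegree_eq_zero hdeg, Ne, C_eq_zero] at hP0
  rw [← hPx.isUnit_iff, eq_C_of_natDegree_eq_zero hdeg, map_C]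
  exact isUnit_C.mpr (isUnit_iff_ne_zero.mpr (by simpa using hP0))

end Polynomial

namespace CriticalOrbit

noncomputable def orbit (d : ℕ) : ℕ → ℤ[X]
  | 0 => X ^ d
  | n + 1 => (orbit d n - X ^ d) ^ 2 + (2 * X ^ d + X)

theorem map_orbit_succ_zmod_two (d n : ℕ) :
    (orbit d (n + 1)).map (Int.castRingHom (ZMod 2)) =
      ((orbit d n).map (Int.castRingHom (ZMod 2)) - X ^ d) ^ 2 + X := by
  simp [orbit, CharTwo.two_eq_zero]

theorem monic_orbit_succ_sub_X_pow_and_le_natDegree {d : ℕ} (hd : 2 ≤ d) (n : ℕ) :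
    (orbit d (n + 1) - X ^ d).Monic ∧ d ≤ (orbit d (n + 1) - X ^ d).natDegree := by
  have hlow : (X ^ d + X : ℤ[X]).natDegree ≤ d := by compute_degree; omega
  induction n with
  | zero =>
    have hX : (X : ℤ[X]).natDegree < (X ^ d : ℤ[X]).natDegree := by simp; omega
    have h : orbit d 1 - X ^ d = X ^ d + X := by simp only [orbit]; ring
    rw [h, natDegree_add_eq_left_of_natDegree_lt hX, natDegree_X_pow]
    exact ⟨(monic_X_pow d).add_of_left (degree_lt_degree hX), le_rfl⟩
  | succ n ih =>
    obtain ⟨hmonic, hdeg⟩ := ih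
    have hlt : (X ^ d + X : ℤ[X]).natDegree < ((orbit d (n + 1) - X ^ d) ^ 2).natDegree := by
      rw [natDegree_pow]; omega
    have h : orbit d (n + 2) - X ^ d = (orbit d (n + 1) - X ^ d) ^ 2 + (X ^ d + X) := by
      rw [orbit]; ring
    rw [h, natDegree_add_eq_left_of_natDegree_lt hlt, natDegree_pow]
    exact ⟨(hmonic.pow 2).add_of_left (degree_lt_degree hlt), by omega⟩

theorem not_four_dvd_leadingCoeff_orbit {d : ℕ} (hd : 2 ≤ d) (n : ℕ) :
    ¬ (2 : ℤ) ^ 2 ∣ (orbit d (n + 1)).leadingCoeff := by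
  cases n with
  | zero =>
    have h : orbit d 1 = C 2 * X ^ d + X := by simp only [orbit, C_ofNat]; ring
    have hlt : (X : ℤ[X]).degree < (C 2 * X ^ d : ℤ[X]).degree := by
      rw [degree_C_mul_X_pow _ two_ne_zero, degree_X]; exact_mod_cast (by omega : 1 < d)
    rw [h, leadingCoeff_add_of_degree_lt' hlt, leadingCoeff_C_mul_X_pow]
    decide
  | succ n =>
    obtain ⟨hmonic, hdeg⟩ := monic_orbit_succ_sub_X_pow_and_le_natDegree hd n
    have hlt : (2 * X ^ d + X : ℤ[X]).natDegree < ((orbit d (n + 1) - X ^ d) ^ 2).natDegree := by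
      rw [natDegree_pow]; compute_degree; omega
    rw [orbit, ((hmonic.pow 2).add_of_left (degree_lt_degree hlt)).leadingCoeff]
    norm_num

noncomputable def xSqIter : ℕ → ℤ[X]
  | 0 => 1
  | k + 1 => X * xSqIter k ^ 2 + 1

theorem coeff_zero_xSqIter (k : ℕ) : (xSqIter k).coeff 0 = 1 := by
  cases k <;> simp [xSqIter]

theorem monic_xSqIter (k : ℕ) : (xSqIter k).Monic := by
  induction k with
  | zero => exact monic_one
  | succ k ih =>
    refine (monic_X.mul (ih.pow 2)).add_of_left (degree_lt_degree ?_)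
    rw [natDegree_one, monic_X.natDegree_mul (ih.pow 2), natDegree_X]
    omega

theorem natDegree_xSqIter_succ (k : ℕ) :
    (xSqIter (k + 1)).natDegree = (xSqIter k).natDegree * 2 + 1 := by
  have hdeg : (X * xSqIter k ^ 2).natDegree = (xSqIter k).natDegree * 2 + 1 := by
    rw [monic_X.natDegree_mul ((monic_xSqIter k).pow 2), natDegree_X, natDegree_pow]
    ring
  rw [xSqIter, natDegree_add_eq_left_of_natDegree_lt (by rw [hdeg, natDegree_one]; omega), hdeg]

theorem orbit_one_succ (k : ℕ) : orbit 1 (k + 1) = X * (C 2 * xSqIter k + 1).comp (C 2 * X) := by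
  induction k with
  | zero => simp [orbit, xSqIter]; ring
  | succ k ih =>
    rw [orbit, ih, xSqIter]
    simp only [add_comp, mul_comp, one_comp, X_comp, pow_comp, ofNat_comp, C_ofNat]
    ring

theorem irreducible_map_C_two_mul_xSqIter_succ_add_one (k : ℕ) :
    Irreducible ((C 2 * xSqIter (k + 1) + 1).map (Int.castRingHom ℚ)) := by
  set f := C 2 * xSqIter (k + 1) + 1
  have hpos : 0 < (xSqIter (k + 1)).natDegree := by rw [natDegree_xSqIter_succ]; omega
  have hcoeff (n : ℕ) (hn : 0 < n) : f.coeff n = 2 * (xSqIter (k + 1)).coeff n := by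
    simp [f, coeff_one, hn.ne']
  have h0 : f.coeff 0 = 3 := by simp [f, coeff_zero_xSqIter]
  have hdeg : f.natDegree = (xSqIter (k + 1)).natDegree := by
    rw [natDegree_add_eq_left_of_natDegree_lt, natDegree_C_mul two_ne_zero]
    rwa [natDegree_C_mul two_ne_zero, natDegree_one]
  have hlc : f.leadingCoeff = 2 := by
    rw [leadingCoeff, hdeg, hcoeff _ hpos, ← leadingCoeff, (monic_xSqIter _).leadingCoeff,
      mul_one]
  have hprim : f.IsPrimitive := by
    intro r hr
    rw [C_dvd_iff_dvd_coeff] at hr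
    have h3 : r ∣ 3 := h0 ▸ hr 0
    have h2 : r ∣ 2 := hlc ▸ hr _
    exact isUnit_of_dvd_one (by simpa using dvd_sub h3 h2)
  refine (IsPrimitive.Int.irreducible_iff_irreducible_map_cast hprim).mp
    (irreducible_of_isEisensteinAt_mirror (P := Ideal.span {2}) ?_ hprim ?_ ?_ ?_ ?_)
  · exact (Ideal.span_singleton_prime two_ne_zero).mpr Int.prime_two
  · rwa [hdeg]
  · rw [h0, Ideal.mem_span_singleton]; decide
  · intro n hn; rw [hcoeff n hn, Ideal.mem_span_singleton]; exact dvd_mul_right _ _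
  · rw [hlc, sq, Ideal.span_singleton_mul_span_singleton, Ideal.mem_span_singleton]; decide

theorem squarefree_map_orbit_of_two_le {d : ℕ} (hd : 2 ≤ d) (n : ℕ) :
    Squarefree ((orbit d (n + 1)).map (Int.castRingHom ℚ)) := by
  refine squarefree_map_of_squarefree_map_zmod (p := 2) ?_
    (by exact_mod_cast not_four_dvd_leadingCoeff_orbit hd n)
  rw [map_orbit_succ_zmod_two]
  exact (separable_sq_add_X _).squarefree

theorem squarefree_map_orbit_one (k : ℕ) :
    Squarefree ((orbit 1 (k + 1)).map (Int.castRingHom ℚ)) := by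
  have hX : (C 2 * X : ℤ[X]).map (Int.castRingHom ℚ) = C 2 * X := by
    rw [Polynomial.map_mul, map_C, map_X, map_ofNat]
  rw [orbit_one_succ, Polynomial.map_mul, map_X, map_comp, hX]
  refine squarefree_X_mul ?_ ?_
  · cases k with
    | zero =>
      have h3 : (C 2 * xSqIter 0 + 1 : ℤ[X]) = C 3 := by
        rw [xSqIter, mul_one, ← C_1, ← C_add]; norm_num
      rw [h3, map_C, C_comp]
      exact (isUnit_C.mpr (by norm_num)).squarefree
    | succ k =>
      exact ((irreducible_map_C_two_mul_xSqIter_succ_add_one k).comp_C_mul_X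
        two_ne_zero).squarefree
  · rw [coeff_zero_eq_eval_zero]
    simp [eval_comp, ← coeff_zero_eq_eval_zero, coeff_zero_xSqIter]
    norm_num

end CriticalOrbit

/-- For `γ = t^d`, `c = 2t^d + t` in `ℚ[t]` (`d ≥ 1`), every term `a_n`
(`n ≥ 1`) of the critical orbit `a₀ = γ`, `a_{n+1} = (a_n - γ)² + c` is squarefree. -/
theorem stmt_12 (d : ℕ) (hd : 1 ≤ d) (a : ℕ → Polynomial ℚ)
    (h0 : a 0 = X ^ d)
    (hrec : ∀ n, a (n + 1) = (a n - X ^ d) ^ 2 + (2 * X ^ d + X)) :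
    ∀ n, 1 ≤ n → Squarefree (a n) := by
  have hmap (n : ℕ) : a n = (CriticalOrbit.orbit d n).map (Int.castRingHom ℚ) := by
    induction n with
    | zero => simp [h0, CriticalOrbit.orbit]
    | succ n ih => simp [hrec, ih, CriticalOrbit.orbit]
  intro n hn
  obtain ⟨k, rfl⟩ := Nat.exists_eq_add_of_le' hn
  rw [hmap]
  rcases hd.eq_or_lt with rfl | hd
  · exact CriticalOrbit.squarefree_map_orbit_one k
  · exact CriticalOrbit.squarefree_map_orbit_of_two_le hd k
end
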